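/- In the finite higher abelian quantum double model described below, let ω be a state on B(H) such that ω(A_x⁰) = 1 and ω(B_y⁰) = 1 for all simplices x, y ∈ K (a frustration-free state). Then ω(A_s B_ν) = 1 for every s ∈ Hom^{−1} and every ν ∈ Hom_1. -/

import Mathlib

open ComplexOrder

/-- Transport along an equality of indices. -/
def gcast {G : ℤ → Type*} [∀ j, AddCommGroup (G j)] {a b : ℤ} (h : a = b) :
    G a →+ G b where
  toFun g := h ▸ g
  map_zero' := by subst h; rfl
  map_add' := by subst h; intros; rfl

variable (K : ℕ → Type*) (G : ℤ → Type*) [∀ j, AddCommGroup (G j)]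

/-- A `p`-map: a family of maps `K n → G (n - p)`, i.e. of homomorphisms
`C n →+ G (n - p)` from the free abelian group `C n` on `K n`. -/
def PMap (p : ℤ) : Type _ := ∀ n : ℕ, K n → G ((n : ℤ) - p)

instance (p : ℤ) : AddCommGroup (PMap K G p) :=
  inferInstanceAs (AddCommGroup (∀ n : ℕ, K n → G ((n : ℤ) - p)))

/-- The Pontryagin dual `Ĝ j` of `G j`: characters valued in the circle group. -/
abbrev GHat (j : ℤ) : Type _ := AddChar (G j) Circle

/-- Transport of characters along an equality of indices. -/
noncomputable def gcastHat {G : ℤ → Type*} [∀ j, AddCommGroup (G j)] {a b : ℤ} (h : a = b)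
    (α : GHat G a) : GHat G b :=
  AddChar.compAddMonoidHom α (gcast h.symm)

variable {G} in
/-- The dual differential `∂̂G j : Ĝ j → Ĝ (j+1)`, `α ↦ α ∘ dG (j+1)`. -/
noncomputable def dGHat (dG : ∀ j : ℤ, G j →+ G (j - 1)) (j : ℤ) (α : GHat G j) : GHat G (j + 1) :=
  AddChar.compAddMonoidHom α ((gcast (show j + 1 - 1 = j by ring)).comp (dG (j + 1)))

/-- A dual `p`-map: a family of maps `K n → Ĝ (n - p)`. -/
def DMap (p : ℤ) : Type _ := ∀ n : ℕ, K n → GHat G ((n : ℤ) - p)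

noncomputable instance (p : ℤ) : AddCommGroup (DMap K G p) :=
  inferInstanceAs (AddCommGroup (∀ n : ℕ, K n → GHat G ((n : ℤ) - p)))

variable {K G}

/-- The term `t_{n-1} ∘ ∂_n` of the differential `δ^p` (zero in degree `0`). -/
noncomputable def pmapBdryTerm (ε : ∀ n, K (n + 1) → K n → ℤ) (p : ℤ) (t : PMap K G p) :
    ∀ n : ℕ, K n → G ((n : ℤ) - (p + 1))
  | 0, _ => 0
  | (m + 1), x =>
      gcast (show (m : ℤ) - p = ((m + 1 : ℕ) : ℤ) - (p + 1) by push_cast; ring)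
        (∑ᶠ y : K m, ε m x y • t m y)

/-- The differential `δ^p : Hom(C,G)^p → Hom(C,G)^{p+1}`,
`(δ^p t) n = t (n-1) ∘ ∂ n - (-1)^p ∂G (n - p) ∘ t n`. -/
noncomputable def deltaUp (ε : ∀ n, K (n + 1) → K n → ℤ)
    (dG : ∀ j : ℤ, G j →+ G (j - 1)) (p : ℤ) (t : PMap K G p) : PMap K G (p + 1) :=
  fun n x =>
    pmapBdryTerm ε p t n x -
      (((-1 : ℤˣ) ^ p : ℤˣ) : ℤ) •
        gcast (show (n : ℤ) - p - 1 = (n : ℤ) - (p + 1) by ring)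
          (dG ((n : ℤ) - p) (t n x))

/-- The differential `δ_p : Hom(C,G)_p → Hom(C,G)_{p-1}`,
`(δ_p γ) n = γ (n+1) ∘ ∂̂ (n+1) - (-1)^p ∂̂G (n-p) ∘ γ n`. -/
noncomputable def deltaDown (ε : ∀ n, K (n + 1) → K n → ℤ)
    (dG : ∀ j : ℤ, G j →+ G (j - 1)) (p : ℤ) (γ : DMap K G p) : DMap K G (p - 1) :=
  fun n x =>
    gcastHat (show ((n + 1 : ℕ) : ℤ) - p = (n : ℤ) - (p - 1) by push_cast; ring)
        (∑ᶠ z : K (n + 1), ε n z x • γ (n + 1) z) -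
      (((-1 : ℤˣ) ^ p : ℤˣ) : ℤ) •
        gcastHat (show (n : ℤ) - p + 1 = (n : ℤ) - (p - 1) by ring)
          (dGHat dG ((n : ℤ) - p) (γ n x))

/-- Transport of `p`-maps along an equality of degrees. -/
def pmapCast {p q : ℤ} (h : p = q) (t : PMap K G p) : PMap K G q := h ▸ t

/-- Transport of dual `p`-maps along an equality of degrees. -/
def dmapCast {p q : ℤ} (h : p = q) (γ : DMap K G p) : DMap K G q := h ▸ γ

/-- The pairing `γ(t) = ∏_n ∏_{x ∈ K n} γ n x (t n x) ∈ U(1)` between a dual `p`-map `γ`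
and a `p`-map `t`. -/
noncomputable def pairing (p : ℤ) (γ : DMap K G p) (t : PMap K G p) : Circle :=
  ∏ᶠ (n : ℕ) (x : K n), γ n x (t n x)

/-- The Hilbert space `H = ℓ²(Hom⁰)` of the model, with orthonormal basis indexed by the
configurations `f ∈ Hom⁰ = Hom(C,G)⁰`. -/
abbrev QdmSpace (K : ℕ → Type*) (G : ℤ → Type*) [∀ j, AddCommGroup (G j)] : Type _ :=
  EuclideanSpace ℂ (PMap K G 0)

section Operators

variable [Fintype (PMap K G 0)]

/-- The shift operator `P_t`, `P_t |f⟩ = |t + f⟩`. -/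
noncomputable def Pop (t : PMap K G 0) : QdmSpace K G →L[ℂ] QdmSpace K G :=
  LinearMap.toContinuousLinearMap
    { toFun := fun ψ => (WithLp.toLp 2 (fun f => ψ (f - t)) : QdmSpace K G)
      map_add' := fun _ _ => rfl
      map_smul' := fun _ _ => rfl }

/-- The clock operator `Q_γ`, `Q_γ |f⟩ = γ(f) |f⟩`. -/
noncomputable def Qop (γ : DMap K G 0) : QdmSpace K G →L[ℂ] QdmSpace K G :=
  LinearMap.toContinuousLinearMap
    { toFun := fun ψ => (WithLp.toLp 2 (fun f => (pairing 0 γ f : ℂ) * ψ f) : QdmSpace K G)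
      map_add' := fun ψ φ => by ext f; simp [mul_add]
      map_smul' := fun c ψ => by ext f; simp [mul_comm, mul_assoc, mul_left_comm] }

variable (ε : ∀ n, K (n + 1) → K n → ℤ) (dG : ∀ j : ℤ, G j →+ G (j - 1))

/-- The operator `A_s = P_{δ^{-1} s}` for `s ∈ Hom(C,G)^{-1}`. -/
noncomputable def Aop (s : PMap K G (-1)) : QdmSpace K G →L[ℂ] QdmSpace K G :=
  Pop (pmapCast (show (-1 : ℤ) + 1 = 0 by norm_num) (deltaUp ε dG (-1) s))

/-- The operator `B_ν = Q_{δ_1 ν}` for `ν ∈ Hom(C,G)_1`. -/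
noncomputable def Bop (ν : DMap K G 1) : QdmSpace K G →L[ℂ] QdmSpace K G :=
  Qop (dmapCast (show (1 : ℤ) - 1 = 0 by norm_num) (deltaDown ε dG 1 ν))

open scoped Classical in
/-- The localized `(-1)`-map `x*_g`: value `g` at the simplex `x` and `0` elsewhere. -/
noncomputable def singleP {n : ℕ} (x : K n) (g : G ((n : ℤ) - (-1))) : PMap K G (-1) :=
  fun m y => if h : ∃ hm : m = n, HEq y x then gcast (by rw [h.choose]) g else 0

open scoped Classical in
/-- The localized dual `1`-map `x_*^χ`: value `χ` at the simplex `x`, trivial elsewhere. -/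
noncomputable def singleD {n : ℕ} (x : K n) (χ : GHat G ((n : ℤ) - 1)) : DMap K G 1 :=
  fun m y => if h : ∃ hm : m = n, HEq y x then gcastHat (by rw [h.choose]) χ else 1

variable [∀ j, Fintype (G j)] [∀ j, Fintype (GHat G j)]

/-- The generalized star operator
`A_x⁰ = |G_{n+1}|⁻¹ ∑_{g ∈ G_{n+1}} A_{x*_g}` for `x ∈ K n`. -/
noncomputable def Astar {n : ℕ} (x : K n) : QdmSpace K G →L[ℂ] QdmSpace K G :=
  (Fintype.card (G ((n : ℤ) - (-1))) : ℂ)⁻¹ •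
    ∑ g : G ((n : ℤ) - (-1)), Aop ε dG (singleP x g)

/-- The generalized plaquette operator
`B_x⁰ = |G_{n-1}|⁻¹ ∑_{χ ∈ Ĝ_{n-1}} B_{x_*^χ}` for `x ∈ K n`. -/
noncomputable def Bplaq {n : ℕ} (x : K n) : QdmSpace K G →L[ℂ] QdmSpace K G :=
  (Fintype.card (G ((n : ℤ) - 1)) : ℂ)⁻¹ •
    ∑ χ : GHat G ((n : ℤ) - 1), Bop ε dG (singleD x χ)

end Operators

/-!
If a state `ω` takes the value `1` on a unitary `U`, then `ω(star (star U - 1) * (star U - 1)) = 0`,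
so by Cauchy–Schwarz `ω(U V) = ω(V)` for every `V`; hence the unitaries on which `ω` is `1` are
closed under products. Since `|ω(U)| ≤ 1` for unitaries, an average of unitaries has `ω`-value `1`
only if each of its terms has, so the frustration-free conditions give `ω(A_{x*_g}) = 1` and
`ω(B_{x_*^χ}) = 1`. Finally `s ↦ A_s` and `ν ↦ B_ν` turn sums into products of unitaries, and
every `s` and `ν` is a finite sum of the localized maps `x*_g` and `x_*^χ`.
-/

namespace LinearMap

variable {A : Type*} [Ring A] [StarRing A] [Algebra ℂ A] [StarModule ℂ A]
  (ω : A →ₗ[ℂ] ℂ) (hpos : ∀ T : A, 0 ≤ ω (star T * T))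
include hpos

theorem apply_star_eq_conj (T : A) : ω (star T) = starRingEnd ℂ (ω T) := by
  have him : ∀ S : A, (ω (star S * S)).im = 0 := fun S => (Complex.nonneg_iff.mp (hpos S)).2.symm
  have expand : ∀ c : ℂ, ω (star (T + c • 1) * (T + c • 1)) = ω (star T * T) +
      c * ω (star T) + starRingEnd ℂ c * ω T + starRingEnd ℂ c * c * ω 1 := by
    intro c
    simp only [star_add, star_smul, star_one, add_mul, mul_add, smul_mul_assoc, mul_smul_comm,
      mul_one, one_mul, map_add, map_smul, smul_eq_mul, Complex.star_def]
    ring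
  -- polarization: the imaginary parts at `T + 1` and `T + i` vanish
  have h1 := him (T + (1 : ℂ) • 1)
  have hI := him (T + Complex.I • 1)
  have hω1 := him 1
  rw [star_one, one_mul] at hω1
  rw [expand] at h1 hI
  simp only [Complex.add_im, Complex.mul_im, map_one, Complex.one_re, Complex.one_im,
    Complex.conj_I, Complex.I_re, Complex.I_im, Complex.neg_re, Complex.neg_im, him T, hω1] at h1 hI
  apply Complex.ext <;> simp only [Complex.conj_re, Complex.conj_im] <;> linarith

theorem apply_star_mul_eq_zero_of_apply_star_mul_self_eq_zero {X : A}
    (hX : ω (star X * X) = 0) (Y : A) : ω (star X * Y) = 0 := by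
  set a := ω (star X * Y) with ha
  by_contra hne
  have hYX : ω (star Y * X) = starRingEnd ℂ a := by
    rw [← apply_star_eq_conj ω hpos, star_mul, star_star]
  -- positivity along the ray `Y - t a X` forces `2 t |a|² ≤ ω(Y*Y)` for every real `t`
  have key : ∀ t : ℝ, 2 * t * Complex.normSq a ≤ (ω (star Y * Y)).re := by
    intro t
    have h := (Complex.nonneg_iff.mp (hpos (Y + (-(t : ℂ) * a) • X))).1
    simp only [star_add, star_smul, add_mul, mul_add, smul_mul_assoc, mul_smul_comm,
      map_add, map_smul, smul_eq_mul, hX, mul_zero, hYX, ← ha, add_zero] at h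
    have hcross : star (-(t : ℂ) * a) * a + -(t : ℂ) * a * starRingEnd ℂ a
        = ((-(2 * t * Complex.normSq a) : ℝ) : ℂ) := by
      simp only [Complex.star_def, map_mul, map_neg, Complex.conj_ofReal]
      rw [mul_assoc, mul_assoc, ← Complex.normSq_eq_conj_mul_self, Complex.mul_conj]
      push_cast; ring
    rw [add_assoc, hcross, Complex.add_re, Complex.ofReal_re] at h
    linarith
  have hna : 0 < Complex.normSq a := Complex.normSq_pos.mpr hne
  have := key (((ω (star Y * Y)).re + 1) / (2 * Complex.normSq a))
  field_simp at this
  linarith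

variable (hone : ω 1 = 1)
include hone

theorem normSq_apply_le_one_of_star_mul_self_eq_one {U : A} (hU : star U * U = 1) :
    Complex.normSq (ω U) ≤ 1 := by
  set z := ω U
  -- `0 ≤ ω((1 - z̄U)*(1 - z̄U)) = 1 - |z|²`
  have h := (Complex.nonneg_iff.mp (hpos (1 - starRingEnd ℂ z • U))).1
  simp only [star_sub, star_one, star_smul, sub_mul, mul_sub, one_mul, mul_one,
    smul_mul_assoc, mul_smul_comm, hU, map_sub, map_smul, smul_eq_mul, hone,
    apply_star_eq_conj ω hpos, Complex.star_def, Complex.conj_conj] at h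
  rw [Complex.normSq_apply]
  simp only [Complex.sub_re, Complex.mul_re, Complex.one_re, Complex.conj_re,
    Complex.conj_im] at h
  nlinarith

theorem apply_mul_eq_of_apply_eq_one {U : A} (hU : U * star U = 1) (hωU : ω U = 1) (V : A) :
    ω (U * V) = ω V := by
  have hωU' : ω (star U) = 1 := by rw [apply_star_eq_conj ω hpos, hωU, map_one]
  have hX : ω (star (star U - 1) * (star U - 1)) = 0 := by
    have : star (star U - 1) * (star U - 1) = U * star U - U - star U + 1 := by
      rw [star_sub, star_star, star_one]; noncomm_ring
    rw [this, hU]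
    simp only [map_add, map_sub, hone, hωU, hωU']
    ring
  have h := apply_star_mul_eq_zero_of_apply_star_mul_self_eq_zero ω hpos hX V
  rwa [star_sub, star_star, star_one, sub_mul, one_mul, map_sub, sub_eq_zero] at h

theorem apply_eq_one_of_average_eq_one {ι : Type*} [Fintype ι] [Nonempty ι] {U : ι → A}
    (hU : ∀ i, star (U i) * U i = 1) (havg : ω ((Fintype.card ι : ℂ)⁻¹ • ∑ i, U i) = 1)
    (i : ι) : ω (U i) = 1 := by
  have hnorm := fun j => normSq_apply_le_one_of_star_mul_self_eq_one ω hpos hone (hU j)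
  have hre : ∀ j, (ω (U j)).re ≤ 1 := fun j => by
    nlinarith [hnorm j, Complex.normSq_apply (ω (U j)), sq_nonneg ((ω (U j)).re - 1),
      sq_nonneg (ω (U j)).im]
  rw [map_smul, map_sum, smul_eq_mul, inv_mul_eq_one₀ (by simp)] at havg
  -- real parts at most `1` averaging to `1` are all equal to `1`
  have hsum : ∑ j, (1 - (ω (U j)).re) = 0 := by
    rw [Finset.sum_sub_distrib, ← Complex.re_sum, ← havg]
    simp
  have hre1 : (ω (U i)).re = 1 := by
    linarith [(Finset.sum_eq_zero_iff_of_nonneg fun j _ => sub_nonneg.mpr (hre j)).mp hsum i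
      (Finset.mem_univ i)]
  have him : (ω (U i)).im = 0 := by
    nlinarith [hnorm i, Complex.normSq_apply (ω (U i)), sq_nonneg (ω (U i)).im]
  exact Complex.ext hre1 him

theorem apply_eq_one_of_mem_closure {M : Type*} [AddMonoid M] {F : M → A} (hF0 : F 0 = 1)
    (hFadd : ∀ a b, F (a + b) = F a * F b) (hF : ∀ a, F a * star (F a) = 1) {S : Set M}
    (hS : ∀ a ∈ S, ω (F a) = 1) {a : M} (ha : a ∈ AddSubmonoid.closure S) : ω (F a) = 1 := by
  induction ha using AddSubmonoid.closure_induction with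
  | mem a h => exact hS a h
  | zero => rw [hF0, hone]
  | add a b _ _ ha hb => rw [hFadd, apply_mul_eq_of_apply_eq_one ω hpos hone (hF a) ha, hb]

end LinearMap

section Cochains

variable {K : ℕ → Type*} {G : ℤ → Type*} [∀ j, AddCommGroup (G j)]

theorem pmapCast_add {p q : ℤ} (h : p = q) (t t' : PMap K G p) :
    pmapCast h (t + t') = pmapCast h t + pmapCast h t' := by subst h; rfl

theorem pmapCast_zero {p q : ℤ} (h : p = q) : pmapCast h (0 : PMap K G p) = 0 := by
  subst h; rfl

theorem dmapCast_add {p q : ℤ} (h : p = q) (γ γ' : DMap K G p) :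
    dmapCast h (γ + γ') = dmapCast h γ + dmapCast h γ' := by subst h; rfl

theorem dmapCast_zero {p q : ℤ} (h : p = q) : dmapCast h (0 : DMap K G p) = 0 := by
  subst h; rfl

theorem gcastHat_add {a b : ℤ} (h : a = b) (α β : GHat G a) :
    gcastHat h (α + β) = gcastHat h α + gcastHat h β := rfl

theorem dGHat_add (dG : ∀ j : ℤ, G j →+ G (j - 1)) (j : ℤ) (α β : GHat G j) :
    dGHat dG j (α + β) = dGHat dG j α + dGHat dG j β := rfl

theorem PMap.sum_apply {ι : Type*} {p : ℤ} (S : Finset ι) (F : ι → PMap K G p) (m : ℕ)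
    (y : K m) : (∑ i ∈ S, F i) m y = ∑ i ∈ S, F i m y :=
  map_sum ({ toFun := fun t => t m y, map_zero' := rfl, map_add' := fun _ _ => rfl } :
    PMap K G p →+ G ((m : ℤ) - p)) F S

theorem DMap.sum_apply {ι : Type*} {p : ℤ} (S : Finset ι) (F : ι → DMap K G p) (m : ℕ)
    (y : K m) : (∑ i ∈ S, F i) m y = ∑ i ∈ S, F i m y :=
  map_sum ({ toFun := fun γ => γ m y, map_zero' := rfl, map_add' := fun _ _ => rfl } :
    DMap K G p →+ GHat G ((m : ℤ) - p)) F S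

open scoped Classical in
theorem singleP_apply_self {n : ℕ} (x y : K n) (g : G ((n : ℤ) - (-1))) :
    singleP x g n y = if y = x then g else 0 := by
  by_cases h : y = x
  · subst h
    rw [singleP, dif_pos ⟨rfl, HEq.rfl⟩, if_pos rfl]
    rfl
  · rw [singleP, dif_neg fun ⟨_, hh⟩ => h (eq_of_heq hh), if_neg h]

theorem singleP_apply_of_ne {n m : ℕ} (hmn : m ≠ n) (x : K n) (g : G ((n : ℤ) - (-1)))
    (y : K m) : singleP x g m y = 0 := by
  rw [singleP, dif_neg fun ⟨h, _⟩ => hmn h]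

open scoped Classical in
theorem singleD_apply_self {n : ℕ} (x y : K n) (χ : GHat G ((n : ℤ) - 1)) :
    singleD x χ n y = if y = x then χ else 0 := by
  by_cases h : y = x
  · subst h
    rw [singleD, dif_pos ⟨rfl, HEq.rfl⟩, if_pos rfl]
    rfl
  · rw [singleD, dif_neg fun ⟨_, hh⟩ => h (eq_of_heq hh), if_neg h]
    rfl

theorem singleD_apply_of_ne {n m : ℕ} (hmn : m ≠ n) (x : K n) (χ : GHat G ((n : ℤ) - 1))
    (y : K m) : singleD x χ m y = 0 := by
  rw [singleD, dif_neg fun ⟨h, _⟩ => hmn h]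
  rfl

variable [∀ n, Fintype (K n)] (ε : ∀ n, K (n + 1) → K n → ℤ) (dG : ∀ j : ℤ, G j →+ G (j - 1))

theorem pmapBdryTerm_add (p : ℤ) (t t' : PMap K G p) (n : ℕ) (x : K n) :
    pmapBdryTerm ε p (t + t') n x = pmapBdryTerm ε p t n x + pmapBdryTerm ε p t' n x := by
  cases n with
  | zero => simp [pmapBdryTerm]
  | succ m =>
    simp only [pmapBdryTerm, ← map_add, finsum_eq_sum_of_fintype, ← Finset.sum_add_distrib]
    congr 2 with y
    exact smul_add _ _ _

theorem deltaUp_add (p : ℤ) (t t' : PMap K G p) :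
    deltaUp ε dG p (t + t') = deltaUp ε dG p t + deltaUp ε dG p t' := by
  funext n x
  change pmapBdryTerm ε p (t + t') n x - _ =
    (pmapBdryTerm ε p t n x - _) + (pmapBdryTerm ε p t' n x - _)
  rw [pmapBdryTerm_add, show (t + t') n x = t n x + t' n x from rfl, map_add, map_add, smul_add]
  abel

theorem deltaUp_zero (p : ℤ) : deltaUp ε dG p 0 = 0 :=
  (AddMonoidHom.mk' _ (deltaUp_add ε dG p)).map_zero

theorem deltaDown_add (p : ℤ) (γ γ' : DMap K G p) :
    deltaDown ε dG p (γ + γ') = deltaDown ε dG p γ + deltaDown ε dG p γ' := by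
  funext n x
  have hsum : (∑ᶠ z : K (n + 1), ε n z x • (γ + γ') (n + 1) z)
      = (∑ᶠ z : K (n + 1), ε n z x • γ (n + 1) z)
        + (∑ᶠ z : K (n + 1), ε n z x • γ' (n + 1) z) := by
    simp only [finsum_eq_sum_of_fintype, ← Finset.sum_add_distrib]
    exact Finset.sum_congr rfl fun z _ => zsmul_add _ _ _
  change gcastHat _ _ - _ = (gcastHat _ _ - _) + (gcastHat _ _ - _)
  rw [hsum, show (γ + γ') n x = γ n x + γ' n x from rfl, gcastHat_add, dGHat_add, gcastHat_add,
    zsmul_add]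
  abel

theorem deltaDown_zero (p : ℤ) : deltaDown ε dG p 0 = 0 :=
  (AddMonoidHom.mk' _ (deltaDown_add ε dG p)).map_zero

variable (N : ℕ) (hdim : ∀ n : ℕ, N < n → IsEmpty (K n))
include hdim

theorem pmap_eq_sum_singleP (s : PMap K G (-1)) :
    s = ∑ n ∈ Finset.range (N + 1), ∑ x : K n, singleP x (s n x) := by
  classical
  funext m y
  have hm : m ∈ Finset.range (N + 1) :=
    Finset.mem_range.mpr (by by_contra h; exact (hdim m (by omega)).false y)
  rw [PMap.sum_apply, Finset.sum_eq_single_of_mem m hm fun n _ hnm => by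
    rw [PMap.sum_apply]; exact Finset.sum_eq_zero fun x _ => singleP_apply_of_ne hnm.symm x _ y]
  simp [PMap.sum_apply, singleP_apply_self]

theorem dmap_eq_sum_singleD (ν : DMap K G 1) :
    ν = ∑ n ∈ Finset.range (N + 1), ∑ x : K n, singleD x (ν n x) := by
  classical
  funext m y
  have hm : m ∈ Finset.range (N + 1) :=
    Finset.mem_range.mpr (by by_contra h; exact (hdim m (by omega)).false y)
  rw [DMap.sum_apply, Finset.sum_eq_single_of_mem m hm fun n _ hnm => by
    rw [DMap.sum_apply]; exact Finset.sum_eq_zero fun x _ => singleD_apply_of_ne hnm.symm x _ y]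
  simp [DMap.sum_apply, singleD_apply_self]

theorem mem_closure_singleP (s : PMap K G (-1)) :
    s ∈ AddSubmonoid.closure
      {t | ∃ (n : ℕ) (x : K n) (g : G ((n : ℤ) - (-1))), singleP x g = t} := by
  rw [pmap_eq_sum_singleP N hdim s]
  exact sum_mem fun n _ => sum_mem fun x _ => AddSubmonoid.subset_closure ⟨n, x, _, rfl⟩

theorem mem_closure_singleD (ν : DMap K G 1) :
    ν ∈ AddSubmonoid.closure
      {γ | ∃ (n : ℕ) (x : K n) (χ : GHat G ((n : ℤ) - 1)), singleD x χ = γ} := by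
  rw [dmap_eq_sum_singleD N hdim ν]
  exact sum_mem fun n _ => sum_mem fun x _ => AddSubmonoid.subset_closure ⟨n, x, _, rfl⟩

end Cochains

section Pairing

variable {K : ℕ → Type*} {G : ℤ → Type*} [∀ j, AddCommGroup (G j)]

theorem pairing_zero {p : ℤ} (f : PMap K G p) : pairing p 0 f = 1 := by
  simp only [pairing]
  exact finprod_eq_one_of_forall_eq_one fun n => finprod_eq_one_of_forall_eq_one fun x => rfl

theorem pairing_neg {p : ℤ} (γ : DMap K G p) (f : PMap K G p) :
    pairing p (-γ) f = (pairing p γ f)⁻¹ := by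
  simp only [pairing, ← finprod_inv_distrib]
  exact finprod_congr fun n => finprod_congr fun x => AddChar.neg_apply' _ _

theorem pairing_eq_prod [∀ n, Fintype (K n)] {N : ℕ} (hdim : ∀ n : ℕ, N < n → IsEmpty (K n))
    {p : ℤ} (γ : DMap K G p) (f : PMap K G p) :
    pairing p γ f = ∏ n ∈ Finset.range (N + 1), ∏ x : K n, γ n x (f n x) := by
  simp only [pairing, finprod_eq_prod_of_fintype]
  refine finprod_eq_prod_of_mulSupport_subset _ fun n hn => ?_
  by_contra hN
  have : IsEmpty (K n) := hdim n (by simpa using hN)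
  exact hn (Finset.prod_of_isEmpty _)

theorem pairing_add [∀ n, Fintype (K n)] {N : ℕ} (hdim : ∀ n : ℕ, N < n → IsEmpty (K n))
    {p : ℤ} (γ γ' : DMap K G p) (f : PMap K G p) :
    pairing p (γ + γ') f = pairing p γ f * pairing p γ' f := by
  simp only [pairing_eq_prod hdim, ← Finset.prod_mul_distrib]
  rfl

end Pairing

section Operators

variable {K : ℕ → Type*} {G : ℤ → Type*} [∀ j, AddCommGroup (G j)] [Fintype (PMap K G 0)]

theorem Pop_apply (t : PMap K G 0) (ψ : QdmSpace K G) (f : PMap K G 0) :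
    Pop t ψ f = ψ (f - t) := rfl

theorem Pop_add (t t' : PMap K G 0) : Pop (t + t') = Pop t * Pop t' := by
  ext ψ f
  simp only [mul_apply_eq_comp, Pop_apply, sub_sub]

theorem Pop_zero : Pop (0 : PMap K G 0) = 1 := by
  ext ψ f
  simp only [Pop_apply, sub_zero, one_apply_eq_self]

theorem star_Pop (t : PMap K G 0) : star (Pop t) = Pop (-t) := by
  rw [ContinuousLinearMap.star_eq_adjoint, eq_comm, ContinuousLinearMap.eq_adjoint_iff]
  intro ψ φ
  simp only [PiLp.inner_apply, Pop_apply]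
  exact Fintype.sum_equiv (Equiv.addRight t) _ _ fun f => by simp

theorem Pop_mem_unitary (t : PMap K G 0) :
    Pop t ∈ unitary (QdmSpace K G →L[ℂ] QdmSpace K G) := by
  rw [Unitary.mem_iff, star_Pop, ← Pop_add, ← Pop_add, neg_add_cancel, add_neg_cancel, Pop_zero]
  exact ⟨rfl, rfl⟩

theorem Qop_apply (γ : DMap K G 0) (ψ : QdmSpace K G) (f : PMap K G 0) :
    Qop γ ψ f = (pairing 0 γ f : ℂ) * ψ f := rfl

theorem Qop_add [∀ n, Fintype (K n)] {N : ℕ} (hdim : ∀ n : ℕ, N < n → IsEmpty (K n))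
    (γ γ' : DMap K G 0) : Qop (γ + γ') = Qop γ * Qop γ' := by
  ext ψ f
  simp only [mul_apply_eq_comp, Qop_apply, pairing_add hdim, Circle.coe_mul, mul_assoc]

theorem Qop_zero : Qop (0 : DMap K G 0) = 1 := by
  ext ψ f
  simp only [Qop_apply, pairing_zero, Circle.coe_one, one_mul, one_apply_eq_self]

theorem star_Qop (γ : DMap K G 0) : star (Qop γ) = Qop (-γ) := by
  rw [ContinuousLinearMap.star_eq_adjoint, eq_comm, ContinuousLinearMap.eq_adjoint_iff]
  intro ψ φ
  simp only [PiLp.inner_apply, Qop_apply, pairing_neg, Circle.coe_inv_eq_conj, RCLike.inner_apply,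
    map_mul, Complex.conj_conj]
  exact Finset.sum_congr rfl fun f _ => by ring

theorem Qop_mem_unitary [∀ n, Fintype (K n)] {N : ℕ} (hdim : ∀ n : ℕ, N < n → IsEmpty (K n))
    (γ : DMap K G 0) : Qop γ ∈ unitary (QdmSpace K G →L[ℂ] QdmSpace K G) := by
  rw [Unitary.mem_iff, star_Qop, ← Qop_add hdim, ← Qop_add hdim, neg_add_cancel, add_neg_cancel,
    Qop_zero]
  exact ⟨rfl, rfl⟩

end Operators

section Generators

variable {K : ℕ → Type*} {G : ℤ → Type*} [∀ j, AddCommGroup (G j)] [Fintype (PMap K G 0)]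
  (ε : ∀ n, K (n + 1) → K n → ℤ) (dG : ∀ j : ℤ, G j →+ G (j - 1))

theorem Aop_mem_unitary (s : PMap K G (-1)) :
    Aop ε dG s ∈ unitary (QdmSpace K G →L[ℂ] QdmSpace K G) :=
  Pop_mem_unitary _

variable [∀ n, Fintype (K n)]

theorem Aop_add (s s' : PMap K G (-1)) : Aop ε dG (s + s') = Aop ε dG s * Aop ε dG s' := by
  rw [Aop, Aop, Aop, deltaUp_add, pmapCast_add, Pop_add]

theorem Aop_zero : Aop ε dG (0 : PMap K G (-1)) = 1 := by
  rw [Aop, deltaUp_zero, pmapCast_zero, Pop_zero]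

theorem Bop_zero : Bop ε dG (0 : DMap K G 1) = 1 := by
  rw [Bop, deltaDown_zero, dmapCast_zero, Qop_zero]

variable {N : ℕ} (hdim : ∀ n : ℕ, N < n → IsEmpty (K n))
include hdim

theorem Bop_add (ν ν' : DMap K G 1) : Bop ε dG (ν + ν') = Bop ε dG ν * Bop ε dG ν' := by
  rw [Bop, Bop, Bop, deltaDown_add, dmapCast_add, Qop_add hdim]

theorem Bop_mem_unitary (ν : DMap K G 1) :
    Bop ε dG ν ∈ unitary (QdmSpace K G →L[ℂ] QdmSpace K G) :=
  Qop_mem_unitary hdim _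

end Generators

theorem AddChar.card_circle_eq {α : Type*} [AddCommGroup α] [Fintype α]
    [Fintype (AddChar α Circle)] : Fintype.card (AddChar α Circle) = Fintype.card α := by
  classical
  rw [Fintype.card_congr AddChar.circleEquivComplex.toEquiv]
  exact AddChar.card_eq

theorem frustrationFree_state_eval_AB_eq_one_general (N : ℕ)
    {K : ℕ → Type*} [∀ n, Fintype (K n)] {G : ℤ → Type*} [∀ j, AddCommGroup (G j)]
    [∀ j, Fintype (G j)] [∀ j, Fintype (GHat G j)] [Fintype (PMap K G 0)]
    (ε : ∀ n, K (n + 1) → K n → ℤ) (dG : ∀ j : ℤ, G j →+ G (j - 1))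
    (hdim : ∀ n : ℕ, N < n → IsEmpty (K n))
    (ω : (QdmSpace K G →L[ℂ] QdmSpace K G) →ₗ[ℂ] ℂ)
    (hpos : ∀ T : QdmSpace K G →L[ℂ] QdmSpace K G, 0 ≤ ω (star T * T))
    (hone : ω 1 = 1)
    (hffA : ∀ (n : ℕ) (x : K n), ω (Astar ε dG x) = 1)
    (hffB : ∀ (m : ℕ) (y : K m), ω (Bplaq ε dG y) = 1)
    (s : PMap K G (-1)) (ν : DMap K G 1) :
    ω (Aop ε dG s * Bop ε dG ν) = 1 := by
  have hA : ω (Aop ε dG s) = 1 := by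
    refine ω.apply_eq_one_of_mem_closure hpos hone (Aop_zero ε dG) (Aop_add ε dG)
      (fun s => Unitary.mul_star_self_of_mem (Aop_mem_unitary ε dG s)) ?_
      (mem_closure_singleP N hdim s)
    rintro _ ⟨n, x, g, rfl⟩
    exact ω.apply_eq_one_of_average_eq_one hpos hone
      (fun g => Unitary.star_mul_self_of_mem (Aop_mem_unitary ε dG _)) (hffA n x) g
  have hB : ω (Bop ε dG ν) = 1 := by
    refine ω.apply_eq_one_of_mem_closure hpos hone (Bop_zero ε dG) (Bop_add ε dG hdim)
      (fun ν => Unitary.mul_star_self_of_mem (Bop_mem_unitary ε dG hdim ν)) ?_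
      (mem_closure_singleD N hdim ν)
    rintro _ ⟨n, x, χ, rfl⟩
    refine ω.apply_eq_one_of_average_eq_one hpos hone
      (fun χ => Unitary.star_mul_self_of_mem (Bop_mem_unitary ε dG hdim _)) ?_ χ
    rw [AddChar.card_circle_eq]
    exact hffB n x
  rw [ω.apply_mul_eq_of_apply_eq_one hpos hone
    (Unitary.mul_star_self_of_mem (Aop_mem_unitary ε dG s)) hA, hB]

/-- a frustration-free state (a state with `ω (A_x⁰) = ω (B_y⁰) = 1`
for all simplices `x, y`) satisfies `ω (A_s B_ν) = 1` for all `s ∈ Hom^{-1}`,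
`ν ∈ Hom_1`. -/
theorem frustrationFree_state_eval_AB_eq_one (N : ℕ)
    {K : ℕ → Type*} [∀ n, Fintype (K n)] {G : ℤ → Type*} [∀ j, AddCommGroup (G j)]
    [∀ j, Fintype (G j)] [∀ j, Fintype (GHat G j)] [Fintype (PMap K G 0)]
    (ε : ∀ n, K (n + 1) → K n → ℤ) (dG : ∀ j : ℤ, G j →+ G (j - 1))
    (hdim : ∀ n : ℕ, N < n → IsEmpty (K n))
    (hGtriv : ∀ j : ℤ, (j < 0 ∨ (N : ℤ) < j) → Subsingleton (G j))
    (hεval : ∀ n (x : K (n + 1)) (y : K n), ε n x y = -1 ∨ ε n x y = 0 ∨ ε n x y = 1)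
    (hεε : ∀ n (x : K (n + 2)) (w : K n), ∑ y : K (n + 1), ε (n + 1) x y * ε n y w = 0)
    (hdG : ∀ j : ℤ, (dG (j - 1)).comp (dG j) = 0)
    (ω : (QdmSpace K G →L[ℂ] QdmSpace K G) →ₗ[ℂ] ℂ)
    (hpos : ∀ T : QdmSpace K G →L[ℂ] QdmSpace K G, 0 ≤ ω (star T * T))
    (hone : ω 1 = 1)
    (hffA : ∀ (n : ℕ) (x : K n), ω (Astar ε dG x) = 1)
    (hffB : ∀ (m : ℕ) (y : K m), ω (Bplaq ε dG y) = 1)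
    (s : PMap K G (-1)) (ν : DMap K G 1) :
    ω (Aop ε dG s * Bop ε dG ν) = 1 :=
  frustrationFree_state_eval_AB_eq_one_general N ε dG hdim ω hpos hone hffA hffB s ν
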